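/- If A is a normal n×n complex matrix, then the block matrix [[|A|, A*], [A, |A|]] is positive semidefinite. -/

import Mathlib

open Matrix
open scoped ComplexOrder

noncomputable def Matrix.PosSemidef.sqrt {n : Type*} [Fintype n] [DecidableEq n]
    {A : Matrix n n ℂ} (hA : A.PosSemidef) : Matrix n n ℂ :=
  hA.1.eigenvectorUnitary.1 * diagonal ((↑) ∘ (Real.sqrt ∘ hA.1.eigenvalues)) *
    (star hA.1.eigenvectorUnitary : Matrix n n ℂ)

theorem Matrix.PosSemidef.posSemidef_sqrt {n : Type*} [Fintype n] [DecidableEq n]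
    {A : Matrix n n ℂ} (hA : A.PosSemidef) : PosSemidef hA.sqrt := by
  unfold Matrix.PosSemidef.sqrt
  have hD : (diagonal ((↑) ∘ (Real.sqrt ∘ hA.1.eigenvalues)) : Matrix n n ℂ).PosSemidef := by
    rw [posSemidef_diagonal_iff]
    intro i
    simp [Real.sqrt_nonneg]
  have := hD.mul_mul_conjTranspose_same (hA.1.eigenvectorUnitary.1)
  simpa [Matrix.star_eq_conjTranspose] using this

/-- The `j`-th largest singular value of a square complex matrix (`j : Fin m`, zero-indexed,
so `sv A 0` is the largest singular value). It is defined as the square root of the `j`-th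
largest eigenvalue of `Aᴴ * A`. -/
noncomputable def sv {m : ℕ} (A : Matrix (Fin m) (Fin m) ℂ) (j : Fin m) : ℝ :=
  Real.sqrt ((Matrix.isHermitian_conjTranspose_mul_self A).eigenvalues
    (Tuple.sort ((Matrix.isHermitian_conjTranspose_mul_self A).eigenvalues) j.rev))

/-- The absolute value `|A| = (Aᴴ A)^{1/2}` of a square complex matrix. -/
noncomputable def matAbs {m : ℕ} (A : Matrix (Fin m) (Fin m) ℂ) : Matrix (Fin m) (Fin m) ℂ :=
  (Matrix.posSemidef_conjTranspose_mul_self A).sqrt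

/-- The `2n × 2n` block matrix `[[A, B], [C, D]]`, reindexed by `Fin (n + n)`. -/
noncomputable def blk {n : ℕ} (A B C D : Matrix (Fin n) (Fin n) ℂ) :
    Matrix (Fin (n + n)) (Fin (n + n)) ℂ :=
  Matrix.reindex finSumFinEquiv finSumFinEquiv (Matrix.fromBlocks A B C D)

/-- `f(P)` for a Hermitian matrix `P`, via the spectral functional calculus. -/
noncomputable def herCfc {m : ℕ} {P : Matrix (Fin m) (Fin m) ℂ} (hP : P.IsHermitian)
    (f : ℝ → ℝ) : Matrix (Fin m) (Fin m) ℂ :=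
  hP.cfc f

/-- `|A| ^ r` (real power of the absolute value), via the functional calculus. -/
noncomputable def matAbsPow {m : ℕ} (A : Matrix (Fin m) (Fin m) ℂ) (r : ℝ) :
    Matrix (Fin m) (Fin m) ℂ :=
  herCfc (Matrix.posSemidef_conjTranspose_mul_self A).posSemidef_sqrt.1 (fun t => t ^ r)

/-- `f(|A|)`, via the functional calculus. -/
noncomputable def matAbsCfc {m : ℕ} (A : Matrix (Fin m) (Fin m) ℂ) (f : ℝ → ℝ) :
    Matrix (Fin m) (Fin m) ℂ :=
  herCfc (Matrix.posSemidef_conjTranspose_mul_self A).posSemidef_sqrt.1 f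

/-- The operator norm: the largest singular value. -/
noncomputable def opNorm {m : ℕ} (A : Matrix (Fin m) (Fin m) ℂ) : ℝ :=
  ⨆ j, sv A j

/-!
The Hermitian matrix `K = [[0, Aᴴ], [A, 0]]` satisfies `Kᴴ K = diag (Aᴴ A, A Aᴴ)`, so
`|K| = diag (|A|, |Aᴴ|)`, and `|Aᴴ| = |A|` when `A` is normal. The block matrix is therefore
`|K| + K = 2 K⁺ ≥ 0`.
-/

namespace CFC

variable {A : Type*} [NonUnitalRing A] [StarRing A] [TopologicalSpace A]
  [Module ℝ A] [SMulCommClass ℝ A A] [IsScalarTower ℝ A A]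
  [NonUnitalContinuousFunctionalCalculus ℝ A IsSelfAdjoint]
  [PartialOrder A] [StarOrderedRing A] [NonnegSpectrumClass ℝ A]
  [IsTopologicalRing A] [T2Space A]

lemma abs_add_self_nonneg (a : A) (ha : IsSelfAdjoint a := by cfc_tac) : 0 ≤ abs a + a := by
  rw [abs_add_self a ha]
  exact nsmul_nonneg (posPart_nonneg a) 2

end CFC

namespace Matrix

open scoped MatrixOrder

variable {𝕜 m n : Type*} [RCLike 𝕜] [Fintype m] [Fintype n] [DecidableEq m] [DecidableEq n]

theorem PosSemidef.fromBlocks_zero₁₂_zero₂₁ {P : Matrix m m 𝕜} {Q : Matrix n n 𝕜}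
    (hP : P.PosSemidef) (hQ : Q.PosSemidef) : (fromBlocks P 0 0 Q).PosSemidef := by
  have hfac : fromBlocks P 0 0 Q =
      (fromBlocks (CFC.sqrt P) 0 0 (CFC.sqrt Q))ᴴ * fromBlocks (CFC.sqrt P) 0 0 (CFC.sqrt Q) := by
    rw [fromBlocks_conjTranspose, fromBlocks_multiply, ← star_eq_conjTranspose,
      ← star_eq_conjTranspose, (CFC.sqrt_nonneg P).isSelfAdjoint.star_eq,
      (CFC.sqrt_nonneg Q).isSelfAdjoint.star_eq, CFC.sqrt_mul_sqrt_self P hP.nonneg,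
      CFC.sqrt_mul_sqrt_self Q hQ.nonneg]
    simp
  rw [hfac]
  exact posSemidef_conjTranspose_mul_self _

theorem cfcAbs_fromBlocks_zero₁₁_zero₂₂ (B C : Matrix n n 𝕜) :
    CFC.abs (fromBlocks 0 B C 0) = fromBlocks (CFC.abs C) 0 0 (CFC.abs B) := by
  refine CFC.sqrt_unique ?_ ((CFC.abs_nonneg C).posSemidef.fromBlocks_zero₁₂_zero₂₁
    (CFC.abs_nonneg B).posSemidef).nonneg
  simp [fromBlocks_multiply, star_eq_conjTranspose, fromBlocks_conjTranspose, CFC.abs_mul_abs]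

theorem PosSemidef.sqrt_eq_cfcSqrt {A : Matrix n n ℂ} (hA : A.PosSemidef) :
    hA.sqrt = CFC.sqrt A := by
  rw [CFC.sqrt_eq_real_sqrt A hA.nonneg, cfcₙ_eq_cfc, hA.1.cfc_eq, IsHermitian.cfc,
    Unitary.conjStarAlgAut_apply]
  rfl

end Matrix

open scoped MatrixOrder in
theorem matAbs_eq_cfcAbs {n : ℕ} (A : Matrix (Fin n) (Fin n) ℂ) : matAbs A = CFC.abs A :=
  (posSemidef_conjTranspose_mul_self A).sqrt_eq_cfcSqrt

open scoped MatrixOrder in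
theorem abs_block_posSemidef_of_normal {n : ℕ} (A : Matrix (Fin n) (Fin n) ℂ)
    (hN : Aᴴ * A = A * Aᴴ) :
    (blk (matAbs A) Aᴴ A (matAbs A)).PosSemidef := by
  set K := fromBlocks 0 Aᴴ A 0
  have hK : IsSelfAdjoint K :=
    isHermitian_zero.fromBlocks (conjTranspose_conjTranspose A) isHermitian_zero
  have hsum : fromBlocks (matAbs A) Aᴴ A (matAbs A) = CFC.abs K + K := by
    rw [cfcAbs_fromBlocks_zero₁₁_zero₂₂, show CFC.abs Aᴴ = CFC.abs A from CFC.abs_star A ⟨hN⟩,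
      matAbs_eq_cfcAbs, fromBlocks_add]
    simp only [add_zero, zero_add]
  rw [blk, reindex_apply]
  exact (hsum ▸ (CFC.abs_add_self_nonneg K).posSemidef).submatrix _
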